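/- Define T_i(x) := −∇²_{xθ}g_i(x,θ_i*(x)) [∇²_{θθ}g_i(x,θ_i*(x))]⁻¹ for each i. Then for every x and all i, j: ‖T_j(x) − T_i(x)‖² ≤ (4 C²_{g,xθ} L²_{g,θθ}/μ_g⁴ + 4 L²_{g,xθ}/μ_g²) ‖θ_i*(x) − θ_j*(x)‖² + (4 C²_{g,xθ}/μ_g⁴) ‖∇²_{θθ}g_i(x,θ_j*(x)) − ∇²_{θθ}g_j(x,θ_j*(x))‖² + (4/μ_g²) ‖∇²_{xθ}g_i(x,θ_j*(x)) − ∇²_{xθ}g_j(x,θ_j*(x))‖². -/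

import Mathlib

noncomputable section

open Set Finset

open Filter Topology
open scoped InnerProductSpace

lemma aux_sc_grad {E : Type*} [NormedAddCommGroup E] [InnerProductSpace ℝ E] [CompleteSpace E]
    {μ : ℝ} {f : E → ℝ} (hf : StrongConvexOn Set.univ μ f)
    {x Gx : E} (hx : HasGradientAt f Gx x) (y : E) :
    ⟪Gx, y - x⟫_ℝ ≤ f y - f x - μ / 2 * ‖x - y‖ ^ 2 := by
  have hline : HasDerivAt (fun t : ℝ => x + t • (y - x)) (y - x) 0 := by
    simpa using ((hasDerivAt_id (0:ℝ)).smul_const (y - x)).const_add x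
  have hx' : HasFDerivAt f (InnerProductSpace.toDual ℝ E Gx) (x + (0:ℝ) • (y - x)) := by
    simpa using hx.hasFDerivAt
  have hd : HasDerivAt (fun t : ℝ => f (x + t • (y - x))) ⟪Gx, y - x⟫_ℝ 0 := by
    have h := hx'.comp_hasDerivAt 0 hline
    simp at h
    exact h
  have hslope : Tendsto (slope (fun t : ℝ => f (x + t • (y - x))) 0) (𝓝[>] 0)
      (𝓝 ⟪Gx, y - x⟫_ℝ) :=
    (hasDerivAt_iff_tendsto_slope.mp hd).mono_left
      (nhdsWithin_mono _ fun t (ht : t ∈ Set.Ioi (0:ℝ)) => ne_of_gt ht)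
  have hrhs : Tendsto (fun t : ℝ => f y - f x - (1 - t) * (μ / 2 * ‖x - y‖ ^ 2)) (𝓝[>] 0)
      (𝓝 (f y - f x - μ / 2 * ‖x - y‖ ^ 2)) := by
    have hc : Continuous fun t : ℝ => f y - f x - (1 - t) * (μ / 2 * ‖x - y‖ ^ 2) := by
      continuity
    have h0 := hc.tendsto 0
    simp only [sub_zero, one_mul] at h0
    exact h0.mono_left nhdsWithin_le_nhds
  refine le_of_tendsto_of_tendsto hslope hrhs ?_
  filter_upwards [Ioo_mem_nhdsGT_of_mem (Set.mem_Ico.mpr ⟨le_refl (0:ℝ), one_pos⟩)] with t ht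
  obtain ⟨ht0, ht1⟩ := ht
  have key := hf.2 (Set.mem_univ x) (Set.mem_univ y)
    (show (0:ℝ) ≤ 1 - t by linarith) ht0.le (by ring)
  have hpt : (1 - t) • x + t • y = x + t • (y - x) := by module
  rw [hpt] at key
  simp only [smul_eq_mul] at key
  rw [slope_def_field]
  simp only [sub_zero, zero_smul, add_zero]
  rw [div_le_iff₀ ht0]
  nlinarith [key]

lemma aux_mono {E : Type*} [NormedAddCommGroup E] [InnerProductSpace ℝ E] [CompleteSpace E]
    {μ : ℝ} {f : E → ℝ} (hf : StrongConvexOn Set.univ μ f)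
    {x y Gx Gy : E} (hx : HasGradientAt f Gx x) (hy : HasGradientAt f Gy y) :
    μ * ‖y - x‖ ^ 2 ≤ ⟪Gy - Gx, y - x⟫_ℝ := by
  have h1 := aux_sc_grad hf hx y
  have h2 := aux_sc_grad hf hy x
  have e1 : ⟪Gy - Gx, y - x⟫_ℝ = -⟪Gy, x - y⟫_ℝ - ⟪Gx, y - x⟫_ℝ := by
    rw [inner_sub_left, show x - y = -(y - x) from by abel, inner_neg_right]; ring
  have e2 : ‖y - x‖ ^ 2 = ‖x - y‖ ^ 2 := by rw [norm_sub_rev]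
  rw [e2] at h2
  rw [e1, e2]
  linarith [h1, h2]

lemma aux_coercive {E : Type*} [NormedAddCommGroup E] [InnerProductSpace ℝ E] [CompleteSpace E]
    {μ : ℝ} {G : E → E} (hmono : ∀ a b : E, μ * ‖b - a‖ ^ 2 ≤ ⟪G b - G a, b - a⟫_ℝ)
    {θ : E} {H : E →L[ℝ] E} (hH : HasFDerivAt G H θ) (v : E) :
    μ * ‖v‖ ^ 2 ≤ ⟪H v, v⟫_ℝ := by
  have hline : HasDerivAt (fun t : ℝ => θ + t • v) v 0 := by
    simpa using ((hasDerivAt_id (0:ℝ)).smul_const v).const_add θ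
  have hH' : HasFDerivAt G H (θ + (0:ℝ) • v) := by simpa using hH
  have hd : HasDerivAt (fun t : ℝ => G (θ + t • v)) (H v) 0 := hH'.comp_hasDerivAt 0 hline
  have hs := (hasDerivAt_iff_tendsto_slope.mp hd).mono_left
      (nhdsWithin_mono _ fun t (ht : t ∈ Set.Ioi (0:ℝ)) => ne_of_gt ht)
  have hti : Tendsto (fun t : ℝ => ⟪slope (fun s : ℝ => G (θ + s • v)) 0 t, v⟫_ℝ) (𝓝[>] 0)
      (𝓝 ⟪H v, v⟫_ℝ) := hs.inner tendsto_const_nhds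
  refine ge_of_tendsto hti ?_
  filter_upwards [self_mem_nhdsWithin] with t (ht : t ∈ Set.Ioi (0:ℝ))
  have ht0 : (0:ℝ) < t := ht
  have hm := hmono θ (θ + t • v)
  have h1 : (θ + t • v) - θ = t • v := by abel
  rw [h1] at hm
  rw [real_inner_smul_right, norm_smul, Real.norm_eq_abs, abs_of_pos ht0] at hm
  rw [slope_def_module]
  simp only [sub_zero, zero_smul, add_zero]
  rw [real_inner_smul_left]
  rw [show t⁻¹ * ⟪G (θ + t • v) - G θ, v⟫_ℝ = ⟪G (θ + t • v) - G θ, v⟫_ℝ / t from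
    inv_mul_eq_div _ _, le_div_iff₀ ht0]
  nlinarith [hm, ht0]

lemma aux_inv {E : Type*} [NormedAddCommGroup E] [InnerProductSpace ℝ E] [CompleteSpace E]
    [FiniteDimensional ℝ E]
    {μ : ℝ} (hμ : 0 < μ) (H : E →L[ℝ] E) (hc : ∀ v, μ * ‖v‖ ^ 2 ≤ ⟪H v, v⟫_ℝ) :
    ‖H.inverse‖ ≤ 1 / μ ∧ (∀ w, H (H.inverse w) = w) ∧ (∀ u, H.inverse (H u) = u) := by
  have hker : LinearMap.ker (H : E →ₗ[ℝ] E) = ⊥ := by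
    rw [LinearMap.ker_eq_bot']
    intro v hv
    by_contra hne
    have hpos : 0 < ‖v‖ := norm_pos_iff.mpr hne
    have h := hc v
    rw [show H v = 0 from hv, inner_zero_left] at h
    nlinarith [mul_pos hμ (mul_pos hpos hpos)]
  have hsurj : LinearMap.range (H : E →ₗ[ℝ] E) = ⊤ :=
    LinearMap.range_eq_top.mpr
      ((LinearMap.injective_iff_surjective (f := (H : E →ₗ[ℝ] E))).mp
        (LinearMap.ker_eq_bot.mp hker))
  let e := ContinuousLinearEquiv.ofBijective H hker hsurj
  have hce : (e : E →L[ℝ] E) = H := ContinuousLinearEquiv.coe_ofBijective H hker hsurj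
  have hinv : H.inverse = (e.symm : E →L[ℝ] E) := by
    rw [← hce, ContinuousLinearMap.inverse_equiv]
  have happ : ∀ w, H (e.symm w) = w := by
    intro w
    conv_lhs => rw [← hce]
    simp
  have hbound : ∀ w, ‖e.symm w‖ ≤ 1 / μ * ‖w‖ := by
    intro w
    have h2 := hc (e.symm w)
    rw [happ w] at h2
    have h3 : ⟪w, e.symm w⟫_ℝ ≤ ‖w‖ * ‖e.symm w‖ := real_inner_le_norm _ _
    rcases eq_or_lt_of_le (norm_nonneg (e.symm w)) with h0 | h0
    · rw [← h0]; positivity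
    · rw [show (1:ℝ) / μ * ‖w‖ = ‖w‖ / μ by ring, le_div_iff₀ hμ]
      nlinarith [h2, h3, h0]
  refine ⟨?_, ?_, ?_⟩
  · rw [hinv]; exact ContinuousLinearMap.opNorm_le_bound _ (by positivity) hbound
  · intro w; rw [hinv]; exact happ w
  · intro u; rw [hinv]
    have : u = e.symm (H u) := by rw [← hce]; simp
    simpa using this.symm

lemma aux_alg (μg Cgxθ Lgθθ Lgxθ d h a N : ℝ) (hμg : 0 < μg) (hC0 : 0 ≤ Cgxθ)
    (hN0 : 0 ≤ N)
    (hfin : N ≤ Cgxθ * (1 / μg * ((h + Lgθθ * d) * (1 / μg))) + (Lgxθ * d + a) * (1 / μg)) :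
    N ^ 2 ≤ (4 * Cgxθ ^ 2 * Lgθθ ^ 2 / μg ^ 4 + 4 * Lgxθ ^ 2 / μg ^ 2) * d ^ 2
      + (4 * Cgxθ ^ 2 / μg ^ 4) * h ^ 2 + (4 / μg ^ 2) * a ^ 2 := by
  have hne : μg ≠ 0 := ne_of_gt hμg
  set q := 1 / μg with hq
  set u := Cgxθ * Lgθθ * d * q ^ 2 with hu
  set v := Cgxθ * h * q ^ 2 with hv
  set w := Lgxθ * d * q with hw
  set z := a * q with hz
  have hS : Cgxθ * (1 / μg * ((h + Lgθθ * d) * (1 / μg))) + (Lgxθ * d + a) * (1 / μg)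
      = u + v + w + z := by rw [hu, hv, hw, hz, hq]; ring
  have hRHS : (4 * Cgxθ ^ 2 * Lgθθ ^ 2 / μg ^ 4 + 4 * Lgxθ ^ 2 / μg ^ 2) * d ^ 2
      + (4 * Cgxθ ^ 2 / μg ^ 4) * h ^ 2 + (4 / μg ^ 2) * a ^ 2
      = 4 * u ^ 2 + 4 * v ^ 2 + 4 * w ^ 2 + 4 * z ^ 2 := by
    rw [hu, hv, hw, hz, hq]
    field_simp
    ring
  rw [hS] at hfin
  have h1 : N ^ 2 ≤ (u + v + w + z) ^ 2 := pow_le_pow_left₀ hN0 hfin 2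
  have h2 : (u + v + w + z) ^ 2 ≤ 4 * u ^ 2 + 4 * v ^ 2 + 4 * w ^ 2 + 4 * z ^ 2 := by
    nlinarith [sq_nonneg (u - v), sq_nonneg (u - w), sq_nonneg (u - z), sq_nonneg (v - w),
      sq_nonneg (v - z), sq_nonneg (w - z)]
  rw [hRHS]
  exact le_trans h1 h2

set_option maxHeartbeats 1000000 in
/-- **Heterogeneity of the implicit-function Jacobians.**
With `T_i(x) := −∇²_{xθ}g_i(x,θ_i*(x)) [∇²_{θθ}g_i(x,θ_i*(x))]⁻¹`
(here `Jxθg i x θ` is the derivative in `x` of the `θ`-gradient of `g_i`, so the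
matrix `∇²_{xθ}g_i` acting on `ℝᵖ` is its adjoint), for every `x` and all `i, j`:
`‖T_j(x) − T_i(x)‖² ≤ (4C²_{g,xθ}L²_{g,θθ}/μ_g⁴ + 4L²_{g,xθ}/μ_g²)‖θ_i*(x) − θ_j*(x)‖²
  + (4C²_{g,xθ}/μ_g⁴)‖∇²_{θθ}g_i(x,θ_j*(x)) − ∇²_{θθ}g_j(x,θ_j*(x))‖²
  + (4/μ_g²)‖∇²_{xθ}g_i(x,θ_j*(x)) − ∇²_{xθ}g_j(x,θ_j*(x))‖²`. -/
theorem stmt_8 {n p m : ℕ}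
    (g : Fin m → EuclideanSpace ℝ (Fin n) → EuclideanSpace ℝ (Fin p) → ℝ)
    (θs : Fin m → EuclideanSpace ℝ (Fin n) → EuclideanSpace ℝ (Fin p))
    (μg Lgxθ Lgθθ Cgxθ : ℝ) (hμg : 0 < μg)
    (hgC2 : ∀ i, ContDiff ℝ 2 (Function.uncurry (g i)))
    (hgSC : ∀ i x, StrongConvexOn univ μg (g i x))
    (hθs : ∀ i x, IsMinOn (g i x) univ (θs i x))
    (gradθg : Fin m → EuclideanSpace ℝ (Fin n) → EuclideanSpace ℝ (Fin p) →
      EuclideanSpace ℝ (Fin p))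
    (hgradθg : ∀ i x θ, HasGradientAt (g i x) (gradθg i x θ) θ)
    (Hθθg : Fin m → EuclideanSpace ℝ (Fin n) → EuclideanSpace ℝ (Fin p) →
      (EuclideanSpace ℝ (Fin p) →L[ℝ] EuclideanSpace ℝ (Fin p)))
    (hHθθg : ∀ i x θ, HasFDerivAt (gradθg i x) (Hθθg i x θ) θ)
    (Jxθg : Fin m → EuclideanSpace ℝ (Fin n) → EuclideanSpace ℝ (Fin p) →
      (EuclideanSpace ℝ (Fin n) →L[ℝ] EuclideanSpace ℝ (Fin p)))
    (hJxθg : ∀ i x θ, HasFDerivAt (fun x' => gradθg i x' θ) (Jxθg i x θ) x)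
    (hLgxθ : ∀ i x x' θ θ',
      ‖Jxθg i x θ - Jxθg i x' θ'‖ ≤ Lgxθ * (‖x - x'‖ + ‖θ - θ'‖))
    (hLgθθ : ∀ i x x' θ θ',
      ‖Hθθg i x θ - Hθθg i x' θ'‖ ≤ Lgθθ * (‖x - x'‖ + ‖θ - θ'‖))
    (hCgxθ : ∀ i x θ, ‖Jxθg i x θ‖ ≤ Cgxθ)
    (T : Fin m → EuclideanSpace ℝ (Fin n) →
      (EuclideanSpace ℝ (Fin p) →L[ℝ] EuclideanSpace ℝ (Fin n)))
    (hT : ∀ i x, T i x =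
      -((ContinuousLinearMap.adjoint (Jxθg i x (θs i x))).comp
          ((Hθθg i x (θs i x)).inverse))) :
    ∀ x (i j : Fin m), ‖T j x - T i x‖ ^ 2 ≤
      (4 * Cgxθ ^ 2 * Lgθθ ^ 2 / μg ^ 4 + 4 * Lgxθ ^ 2 / μg ^ 2) *
        ‖θs i x - θs j x‖ ^ 2
      + (4 * Cgxθ ^ 2 / μg ^ 4) * ‖Hθθg i x (θs j x) - Hθθg j x (θs j x)‖ ^ 2
      + (4 / μg ^ 2) * ‖Jxθg i x (θs j x) - Jxθg j x (θs j x)‖ ^ 2 := by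
  intro x i j
  have hcoer : ∀ (k : Fin m) θ v, μg * ‖v‖ ^ 2 ≤ ⟪Hθθg k x θ v, v⟫_ℝ := fun k θ v =>
    aux_coercive (fun a b => aux_mono (hgSC k x) (hgradθg k x a) (hgradθg k x b))
      (hHθθg k x θ) v
  set θi := θs i x with hθi
  set θj := θs j x with hθj
  set Hi := Hθθg i x θi with hHi
  set Hj := Hθθg j x θj with hHj
  set Ai := Jxθg i x θi with hAi
  set Aj := Jxθg j x θj with hAj
  obtain ⟨hbi, hri, hli⟩ := aux_inv hμg Hi (hcoer i θi)
  obtain ⟨hbj, hrj, hlj⟩ := aux_inv hμg Hj (hcoer j θj)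
  set Ki := Hi.inverse with hKi
  set Kj := Hj.inverse with hKj
  -- difference of inverses
  have hKdiff : Ki - Kj = Ki.comp ((Hj - Hi).comp Kj) := by
    ext w
    simp only [ContinuousLinearMap.sub_apply, ContinuousLinearMap.comp_apply, map_sub,
      hrj w, hli (Kj w)]
  -- difference of T's
  have hTd : T j x - T i x =
      (ContinuousLinearMap.adjoint Ai).comp (Ki - Kj)
        + ((ContinuousLinearMap.adjoint Ai) - (ContinuousLinearMap.adjoint Aj)).comp Kj := by
    rw [hT i x, hT j x]
    simp only [← hθi, ← hθj, ← hHi, ← hHj, ← hAi, ← hAj, ← hKi, ← hKj,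
      ContinuousLinearMap.comp_sub, ContinuousLinearMap.sub_comp]
    abel
  set d := ‖θi - θj‖ with hd
  set h := ‖Hθθg i x θj - Hθθg j x θj‖ with hh
  set a := ‖Jxθg i x θj - Jxθg j x θj‖ with ha
  have hd0 : 0 ≤ d := norm_nonneg _
  have hh0 : 0 ≤ h := norm_nonneg _
  have ha0 : 0 ≤ a := norm_nonneg _
  have hC0 : 0 ≤ Cgxθ := le_trans (norm_nonneg _) (hCgxθ i x θi)
  -- bound on ‖Hj - Hi‖
  have hHji : ‖Hj - Hi‖ ≤ h + Lgθθ * d := by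
    have e : Hj - Hi = (Hθθg j x θj - Hθθg i x θj) + (Hθθg i x θj - Hθθg i x θi) := by abel
    rw [e]
    refine le_trans (norm_add_le _ _) ?_
    have h1 : ‖Hθθg j x θj - Hθθg i x θj‖ = h := by rw [hh, norm_sub_rev]
    have h2 : ‖Hθθg i x θj - Hθθg i x θi‖ ≤ Lgθθ * d := by
      have h3 := hLgθθ i x x θj θi
      rw [sub_self, norm_zero, zero_add, norm_sub_rev θj θi, ← hd] at h3
      exact h3
    linarith [h1.le, h1.ge, h2]
  -- bound on ‖Ai - Aj‖
  have hAij : ‖Ai - Aj‖ ≤ Lgxθ * d + a := by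
    have e : Ai - Aj = (Jxθg i x θi - Jxθg i x θj) + (Jxθg i x θj - Jxθg j x θj) := by abel
    rw [e]
    refine le_trans (norm_add_le _ _) ?_
    have h2 : ‖Jxθg i x θi - Jxθg i x θj‖ ≤ Lgxθ * d := by
      have h3 := hLgxθ i x x θi θj
      rw [sub_self, norm_zero, zero_add, ← hd] at h3
      exact h3
    linarith [h2]
  -- norm of difference of inverses
  have hKd : ‖Ki - Kj‖ ≤ 1 / μg * ((h + Lgθθ * d) * (1 / μg)) := by
    rw [hKdiff]
    refine le_trans (ContinuousLinearMap.opNorm_comp_le _ _) ?_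
    have h2 : ‖(Hj - Hi).comp Kj‖ ≤ (h + Lgθθ * d) * (1 / μg) := by
      refine le_trans (ContinuousLinearMap.opNorm_comp_le _ _) ?_
      exact mul_le_mul hHji hbj (norm_nonneg _) (le_trans (norm_nonneg _) hHji)
    exact mul_le_mul hbi h2 (norm_nonneg _) (by positivity)
  -- adjoint norms
  have hadjAi : ‖ContinuousLinearMap.adjoint Ai‖ = ‖Ai‖ :=
    ContinuousLinearMap.adjoint.norm_map Ai
  have hadjdiff : ‖(ContinuousLinearMap.adjoint Ai) - (ContinuousLinearMap.adjoint Aj)‖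
      = ‖Ai - Aj‖ := by
    rw [← map_sub (ContinuousLinearMap.adjoint : (EuclideanSpace ℝ (Fin n) →L[ℝ]
      EuclideanSpace ℝ (Fin p)) ≃ₗᵢ⋆[ℝ] _) Ai Aj]
    exact ContinuousLinearMap.adjoint.norm_map _
  -- total bound
  have hfin : ‖T j x - T i x‖ ≤
      Cgxθ * (1 / μg * ((h + Lgθθ * d) * (1 / μg))) + (Lgxθ * d + a) * (1 / μg) := by
    rw [hTd]
    refine le_trans (norm_add_le _ _) ?_
    have t1 : ‖(ContinuousLinearMap.adjoint Ai).comp (Ki - Kj)‖ ≤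
        Cgxθ * (1 / μg * ((h + Lgθθ * d) * (1 / μg))) := by
      refine le_trans (ContinuousLinearMap.opNorm_comp_le _ _) ?_
      refine mul_le_mul ?_ hKd (norm_nonneg _) hC0
      rw [hadjAi]; exact hCgxθ i x θi
    have t2 : ‖((ContinuousLinearMap.adjoint Ai) - (ContinuousLinearMap.adjoint Aj)).comp Kj‖
        ≤ (Lgxθ * d + a) * (1 / μg) := by
      refine le_trans (ContinuousLinearMap.opNorm_comp_le _ _) ?_
      rw [hadjdiff]
      refine mul_le_mul hAij hbj (norm_nonneg _) ?_
      calc (0:ℝ) ≤ ‖Ai - Aj‖ := norm_nonneg _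
        _ ≤ Lgxθ * d + a := hAij
    linarith
  -- final algebra
  exact aux_alg μg Cgxθ Lgθθ Lgxθ d h a _ hμg hC0 (norm_nonneg _) hfin
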